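/- Let Ω, u, v : R^3 → R^3 be smooth vector fields forming at each point a direct orthonormal frame. Then δ := [(Ω·∇)u]·v + [(u·∇)v]·Ω + [(v·∇)Ω]·u = −(1/2)[(∇×Ω)·Ω + (∇×u)·u + (∇×v)·v], where ∇× denotes the curl. -/

import Mathlib

open Matrix Real

noncomputable section

/-- Partial derivative `∂ⱼ f` of a scalar field on `ℝ³`. -/
def pd (j : Fin 3) (f : (Fin 3 → ℝ) → ℝ) (x : Fin 3 → ℝ) : ℝ :=
  fderiv ℝ f x (Pi.single j 1)

/-- The directional derivative `(B·∇)C` of a vector field `C` along `B`. -/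
def dirDeriv (B C : (Fin 3 → ℝ) → Fin 3 → ℝ) (x : Fin 3 → ℝ) : Fin 3 → ℝ :=
  fun i => ∑ j, B x j * pd j (fun y => C y i) x

/-- The curl `∇ × B` of a vector field on `ℝ³`. -/
def curl (B : (Fin 3 → ℝ) → Fin 3 → ℝ) (x : Fin 3 → ℝ) : Fin 3 → ℝ :=
  ![pd 1 (fun y => B y 2) x - pd 2 (fun y => B y 1) x,
    pd 2 (fun y => B y 0) x - pd 0 (fun y => B y 2) x,
    pd 0 (fun y => B y 1) x - pd 1 (fun y => B y 0) x]

/-- The cross product of two vectors in `ℝ³`. -/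
def crossVec (a b : Fin 3 → ℝ) : Fin 3 → ℝ :=
  ![a 1 * b 2 - a 2 * b 1, a 2 * b 0 - a 0 * b 2, a 0 * b 1 - a 1 * b 0]

lemma pd_add {f g : (Fin 3 → ℝ) → ℝ} {x : Fin 3 → ℝ} (j : Fin 3)
    (hf : DifferentiableAt ℝ f x) (hg : DifferentiableAt ℝ g x) :
    pd j (fun y => f y + g y) x = pd j f x + pd j g x := by
  unfold pd
  rw [fderiv_fun_add hf hg]
  rfl

lemma pd_sub {f g : (Fin 3 → ℝ) → ℝ} {x : Fin 3 → ℝ} (j : Fin 3)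
    (hf : DifferentiableAt ℝ f x) (hg : DifferentiableAt ℝ g x) :
    pd j (fun y => f y - g y) x = pd j f x - pd j g x := by
  unfold pd
  rw [fderiv_fun_sub hf hg]
  rfl

lemma pd_mul {f g : (Fin 3 → ℝ) → ℝ} {x : Fin 3 → ℝ} (j : Fin 3)
    (hf : DifferentiableAt ℝ f x) (hg : DifferentiableAt ℝ g x) :
    pd j (fun y => f y * g y) x = pd j f x * g x + f x * pd j g x := by
  unfold pd
  rw [fderiv_fun_mul hf hg]
  simp only [ContinuousLinearMap.add_apply, ContinuousLinearMap.smul_apply, smul_eq_mul]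
  ring

theorem delta_eq_neg_half_sum_curl
    (Ω u v : (Fin 3 → ℝ) → Fin 3 → ℝ)
    (hΩ : ContDiff ℝ (⊤ : ℕ∞) Ω) (hu : ContDiff ℝ (⊤ : ℕ∞) u) (hv : ContDiff ℝ (⊤ : ℕ∞) v)
    (horth : ∀ x, ∑ i, Ω x i * u x i = 0)
    (hΩunit : ∀ x, ∑ i, (Ω x i) ^ 2 = 1)
    (huunit : ∀ x, ∑ i, (u x i) ^ 2 = 1)
    (hvdef : ∀ x, v x = crossVec (Ω x) (u x)) :
    ∀ x,
      (∑ i, dirDeriv Ω u x i * v x i) + (∑ i, dirDeriv u v x i * Ω x i)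
        + (∑ i, dirDeriv v Ω x i * u x i)
      = -(1 / 2) * ((∑ i, curl Ω x i * Ω x i) + (∑ i, curl u x i * u x i)
          + (∑ i, curl v x i * v x i)) := by
  intro x
  have hΩd : ∀ i, Differentiable ℝ fun y => Ω y i :=
    differentiable_pi.mp (hΩ.differentiable (by simp))
  have hud : ∀ i, Differentiable ℝ fun y => u y i :=
    differentiable_pi.mp (hu.differentiable (by simp))
  -- orthogonality and its differentiated version
  have hC1 : Ω x 0 * u x 0 + Ω x 1 * u x 1 + Ω x 2 * u x 2 = 0 := by
    have := horth x; simpa [Fin.sum_univ_three] using this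
  have hC2 : Ω x 0 * Ω x 0 + Ω x 1 * Ω x 1 + Ω x 2 * Ω x 2 = 1 := by
    have := hΩunit x; simpa [Fin.sum_univ_three, sq] using this
  have hC3 : u x 0 * u x 0 + u x 1 * u x 1 + u x 2 * u x 2 = 1 := by
    have := huunit x; simpa [Fin.sum_univ_three, sq] using this
  have key : ∀ f g : (Fin 3 → ℝ) → Fin 3 → ℝ,
      (∀ i, Differentiable ℝ fun y => f y i) →
      (∀ i, Differentiable ℝ fun y => g y i) →
      ∀ c : ℝ, (∀ y, f y 0 * g y 0 + (f y 1 * g y 1 + f y 2 * g y 2) = c) →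
      ∀ j : Fin 3,
        pd j (fun y => f y 0) x * g x 0 + f x 0 * pd j (fun y => g y 0) x
          + (pd j (fun y => f y 1) x * g x 1 + f x 1 * pd j (fun y => g y 1) x
            + (pd j (fun y => f y 2) x * g x 2 + f x 2 * pd j (fun y => g y 2) x)) = 0 := by
    intro f g hf hg c hc j
    have h0 : pd j (fun y => f y 0 * g y 0 + (f y 1 * g y 1 + f y 2 * g y 2)) x = 0 := by
      have he : (fun y => f y 0 * g y 0 + (f y 1 * g y 1 + f y 2 * g y 2)) = fun _ => c :=
        funext hc
      rw [he]
      simp [pd]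
    rw [pd_add j ((hf 0 x).fun_mul (hg 0 x)) (((hf 1 x).fun_mul (hg 1 x)).fun_add ((hf 2 x).fun_mul (hg 2 x))),
      pd_add j ((hf 1 x).fun_mul (hg 1 x)) ((hf 2 x).fun_mul (hg 2 x)),
      pd_mul j (hf 0 x) (hg 0 x), pd_mul j (hf 1 x) (hg 1 x), pd_mul j (hf 2 x) (hg 2 x)] at h0
    exact h0
  have hMall := key Ω u hΩd hud 0 (fun y => by
    have := horth y; simp [Fin.sum_univ_three] at this; linarith)
  have hM0 := hMall 0
  have hM1 := hMall 1
  have hM2 := hMall 2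
  -- partial derivatives of v
  have hv0f : (fun y => v y 0) = fun y => Ω y 1 * u y 2 - Ω y 2 * u y 1 :=
    funext fun y => by rw [hvdef y]; simp [crossVec]
  have hv1f : (fun y => v y 1) = fun y => Ω y 2 * u y 0 - Ω y 0 * u y 2 :=
    funext fun y => by rw [hvdef y]; simp [crossVec]
  have hv2f : (fun y => v y 2) = fun y => Ω y 0 * u y 1 - Ω y 1 * u y 0 :=
    funext fun y => by rw [hvdef y]; simp [crossVec]
  have hv0 : ∀ j : Fin 3, pd j (fun y => v y 0) x
      = pd j (fun y => Ω y 1) x * u x 2 + Ω x 1 * pd j (fun y => u y 2) x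
        - (pd j (fun y => Ω y 2) x * u x 1 + Ω x 2 * pd j (fun y => u y 1) x) := fun j => by
    rw [hv0f, pd_sub j ((hΩd 1 x).fun_mul (hud 2 x)) ((hΩd 2 x).fun_mul (hud 1 x)),
      pd_mul j (hΩd 1 x) (hud 2 x), pd_mul j (hΩd 2 x) (hud 1 x)]
  have hv1 : ∀ j : Fin 3, pd j (fun y => v y 1) x
      = pd j (fun y => Ω y 2) x * u x 0 + Ω x 2 * pd j (fun y => u y 0) x
        - (pd j (fun y => Ω y 0) x * u x 2 + Ω x 0 * pd j (fun y => u y 2) x) := fun j => by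
    rw [hv1f, pd_sub j ((hΩd 2 x).fun_mul (hud 0 x)) ((hΩd 0 x).fun_mul (hud 2 x)),
      pd_mul j (hΩd 2 x) (hud 0 x), pd_mul j (hΩd 0 x) (hud 2 x)]
  have hv2 : ∀ j : Fin 3, pd j (fun y => v y 2) x
      = pd j (fun y => Ω y 0) x * u x 1 + Ω x 0 * pd j (fun y => u y 1) x
        - (pd j (fun y => Ω y 1) x * u x 0 + Ω x 1 * pd j (fun y => u y 0) x) := fun j => by
    rw [hv2f, pd_sub j ((hΩd 0 x).fun_mul (hud 1 x)) ((hΩd 1 x).fun_mul (hud 0 x)),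
      pd_mul j (hΩd 0 x) (hud 1 x), pd_mul j (hΩd 1 x) (hud 0 x)]
  have hvx0 : v x 0 = Ω x 1 * u x 2 - Ω x 2 * u x 1 := by rw [hvdef x]; simp [crossVec]
  have hvx1 : v x 1 = Ω x 2 * u x 0 - Ω x 0 * u x 2 := by rw [hvdef x]; simp [crossVec]
  have hvx2 : v x 2 = Ω x 0 * u x 1 - Ω x 1 * u x 0 := by rw [hvdef x]; simp [crossVec]
  simp only [dirDeriv, curl, Fin.sum_univ_three, Matrix.cons_val_zero, Matrix.cons_val_one,
    Matrix.head_cons, Matrix.cons_val_two, Matrix.tail_cons]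
  rw [hv0 0, hv0 1, hv0 2, hv1 0, hv1 1, hv1 2, hv2 0, hv2 1, hv2 2, hvx0, hvx1, hvx2]
  linear_combination ((-1/2) * (Ω x 2) * (u x 1) + (1/2) * (Ω x 1) * (u x 2)) * hM0 +
      ((1/2) * (Ω x 2) * (u x 0) + (-1/2) * (Ω x 0) * (u x 2)) * hM1 +
      ((-1/2) * (Ω x 1) * (u x 0) + (1/2) * (Ω x 0) * (u x 1)) * hM2 +
      (((1/2) * (u x 2)) * (pd 0 (fun y => Ω y 1) x) + ((-1/2) * (u x 1)) * (pd 0 (fun y => Ω y 2) x) + ((1/2) * (Ω x 2)) * (pd 0 (fun y => u y 1) x) + ((-1/2) * (Ω x 1)) * (pd 0 (fun y => u y 2) x) + ((-1/2) * (u x 2)) * (pd 1 (fun y => Ω y 0) x) + ((1/2) * (u x 0)) * (pd 1 (fun y => Ω y 2) x) + ((-1/2) * (Ω x 2)) * (pd 1 (fun y => u y 0) x) + ((1/2) * (Ω x 0)) * (pd 1 (fun y => u y 2) x) + ((1/2) * (u x 1)) * (pd 2 (fun y => Ω y 0) x) + ((-1/2) * (u x 0)) * (pd 2 (fun y => Ω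 y 1) x) + ((1/2) * (Ω x 1)) * (pd 2 (fun y => u y 0) x) + ((-1/2) * (Ω x 0)) * (pd 2 (fun y => u y 1) x)) * hC1 +
      (((-1/2) * (u x 2)) * (pd 0 (fun y => u y 1) x) + ((1/2) * (u x 1)) * (pd 0 (fun y => u y 2) x) + ((1/2) * (u x 2)) * (pd 1 (fun y => u y 0) x) + ((-1/2) * (u x 0)) * (pd 1 (fun y => u y 2) x) + ((-1/2) * (u x 1)) * (pd 2 (fun y => u y 0) x) + ((1/2) * (u x 0)) * (pd 2 (fun y => u y 1) x)) * hC2 +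
      (((-1/2) * (Ω x 2)) * (pd 0 (fun y => Ω y 1) x) + ((1/2) * (Ω x 1)) * (pd 0 (fun y => Ω y 2) x) + ((1/2) * (Ω x 2)) * (pd 1 (fun y => Ω y 0) x) + ((-1/2) * (Ω x 0)) * (pd 1 (fun y => Ω y 2) x) + ((-1/2) * (Ω x 1)) * (pd 2 (fun y => Ω y 0) x) + ((1/2) * (Ω x 0)) * (pd 2 (fun y => Ω y 1) x)) * hC3
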